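/- The maps ε_{k,N} are injective: if f ∈ 𝔤_k is a symmetric smooth function on (ℝ^{2d})^k with f ≠ 0, then ε_{k,N}(f) ≠ 0 as a function on (ℝ^{2d})^N. Equivalently, ε_{k,N}(f) = 0 implies f = 0. -/

import Mathlib

noncomputable section

abbrev Phase (d : ℕ) := (Fin d → ℝ) × (Fin d → ℝ)
abbrev Conf (d k : ℕ) := Fin k → Phase d

/-- Unit vector in the direction of the `a`-th position coordinate of particle `i`. -/
def ex (d k : ℕ) (i : Fin k) (a : Fin d) : Conf d k :=
  Pi.single i ((Pi.single a 1 : Fin d → ℝ), (0 : Fin d → ℝ))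

/-- Unit vector in the direction of the `a`-th velocity coordinate of particle `i`. -/
def ev (d k : ℕ) (i : Fin k) (a : Fin d) : Conf d k :=
  Pi.single i ((0 : Fin d → ℝ), (Pi.single a 1 : Fin d → ℝ))

/-- Standard Poisson bracket on `(ℝ^{2d})^k`:
`{f,g} = Σ_i (∇_{x_i}f·∇_{v_i}g − ∇_{v_i}f·∇_{x_i}g)`. -/
def pb (d k : ℕ) (f g : Conf d k → ℝ) : Conf d k → ℝ := fun z =>
  ∑ i : Fin k, ∑ a : Fin d,
    (fderiv ℝ f z (ex d k i a) * fderiv ℝ g z (ev d k i a)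
      - fderiv ℝ f z (ev d k i a) * fderiv ℝ g z (ex d k i a))

/-- Action of a permutation of particle labels on a function. -/
def permAct (d k : ℕ) (π : Equiv.Perm (Fin k)) (f : Conf d k → ℝ) : Conf d k → ℝ :=
  fun z => f (fun i => z (π i))

/-- Invariance under all permutations of the particle labels. -/
def IsSymmFn (d k : ℕ) (f : Conf d k → ℝ) : Prop :=
  ∀ π : Equiv.Perm (Fin k), permAct d k π f = f

/-- The embedding `ε_{k,N}` of `k`-particle observables into `N`-particle observables. -/
def eps (d k N : ℕ) (f : Conf d k → ℝ) : Conf d N → ℝ := fun z =>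
  (Fintype.card {j : Fin k → Fin N // Function.Injective j} : ℝ)⁻¹ *
    ∑ j : {j : Fin k → Fin N // Function.Injective j}, f (fun i => z (j.1 i))

/-! ### Auxiliary material for the injectivity proof -/

/-- Extend a permutation of `Fin k` to `Fin (k+1)` fixing the last element. -/
def extPerm {k : ℕ} (π : Equiv.Perm (Fin k)) : Equiv.Perm (Fin (k + 1)) :=
  finSuccEquivLast.trans ((Equiv.optionCongr π).trans finSuccEquivLast.symm)

lemma extPerm_castSucc {k : ℕ} (π : Equiv.Perm (Fin k)) (i : Fin k) :
    extPerm π i.castSucc = (π i).castSucc := by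
  simp [extPerm]

lemma extPerm_last {k : ℕ} (π : Equiv.Perm (Fin k)) :
    extPerm π (Fin.last k) = Fin.last k := by
  simp [extPerm]

lemma snoc_comp_extPerm {X : Type*} {k : ℕ} (v : Fin k → X) (y : X) (π : Equiv.Perm (Fin k)) :
    (Fin.snoc v y : Fin (k + 1) → X) ∘ (extPerm π) = Fin.snoc (v ∘ π) y := by
  funext x
  induction x using Fin.lastCases with
  | last => simp [extPerm_last]
  | cast i => simp [extPerm_castSucc]

/-- Snoc-style extension of an embedding. -/
def snocEmb {k M : ℕ} (e : Fin k ↪ Fin M) : Fin (k + 1) ↪ Fin (M + 1) where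
  toFun := Fin.snoc (fun i => (e i).castSucc) (Fin.last M)
  inj' := by
    intro a b hab
    induction a using Fin.lastCases with
    | last =>
      induction b using Fin.lastCases with
      | last => rfl
      | cast i =>
        simp only [Fin.snoc_last, Fin.snoc_castSucc] at hab
        exact absurd hab.symm (Fin.castSucc_lt_last _).ne
    | cast i =>
      induction b using Fin.lastCases with
      | last =>
        simp only [Fin.snoc_last, Fin.snoc_castSucc] at hab
        exact absurd hab (Fin.castSucc_lt_last _).ne
      | cast i' =>
        simp only [Fin.snoc_castSucc, Fin.castSucc_inj] at hab
        exact congrArg Fin.castSucc (e.injective hab)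

lemma snocEmb_castSucc {k M : ℕ} (e : Fin k ↪ Fin M) (i : Fin k) :
    snocEmb e i.castSucc = (e i).castSucc := by
  show (Fin.snoc (fun i => (e i).castSucc) (Fin.last M) : Fin (k + 1) → Fin (M + 1)) i.castSucc = _
  simp [snocEmb]

lemma snocEmb_last {k M : ℕ} (e : Fin k ↪ Fin M) :
    snocEmb e (Fin.last k) = Fin.last M := by
  show (Fin.snoc (fun i => (e i).castSucc) (Fin.last M) : Fin (k + 1) → Fin (M + 1)) (Fin.last k) = _
  simp [snocEmb]

lemma snocEmb_eq_last_iff {k M : ℕ} (e : Fin k ↪ Fin M) (x : Fin (k + 1)) :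
    snocEmb e x = Fin.last M ↔ x = Fin.last k := by
  constructor
  · intro h
    induction x using Fin.lastCases with
    | last => rfl
    | cast i =>
      rw [snocEmb_castSucc] at h
      exact absurd h (Fin.castSucc_lt_last _).ne
  · rintro rfl; exact snocEmb_last e

/-- The decomposition of embeddings `Fin (k+1) ↪ Fin (M+1)` according to whether and where
the last element of the codomain is attained. -/
def theta {k M : ℕ} :
    (Fin (k + 1) ↪ Fin M) ⊕ (Fin (k + 1) × (Fin k ↪ Fin M)) → (Fin (k + 1) ↪ Fin (M + 1))
  | .inl e => e.trans ⟨Fin.castSucc, Fin.castSucc_injective M⟩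
  | .inr (m, e) => (Equiv.swap m (Fin.last k)).toEmbedding.trans (snocEmb e)

lemma theta_inl_apply {k M : ℕ} (e : Fin (k + 1) ↪ Fin M) (x : Fin (k + 1)) :
    theta (.inl e) x = (e x).castSucc := rfl

lemma theta_inr_apply {k M : ℕ} (m : Fin (k + 1)) (e : Fin k ↪ Fin M) (x : Fin (k + 1)) :
    theta (.inr (m, e)) x = snocEmb e (Equiv.swap m (Fin.last k) x) := rfl

lemma theta_inr_eq_last_iff {k M : ℕ} (m : Fin (k + 1)) (e : Fin k ↪ Fin M) (x : Fin (k + 1)) :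
    theta (.inr (m, e)) x = Fin.last M ↔ x = m := by
  rw [theta_inr_apply, snocEmb_eq_last_iff]
  constructor
  · intro h
    have := congrArg (Equiv.swap m (Fin.last k)) h
    rwa [Equiv.swap_apply_self, Equiv.swap_apply_right] at this
  · rintro rfl; exact Equiv.swap_apply_left _ _

lemma theta_bijective {k M : ℕ} :
    Function.Bijective (theta (k := k) (M := M)) := by
  constructor
  · rintro (e₁ | ⟨m₁, e₁⟩) (e₂ | ⟨m₂, e₂⟩) h
    · refine congrArg Sum.inl (DFunLike.ext _ _ fun x => ?_)
      have := DFunLike.congr_fun h x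
      rw [theta_inl_apply, theta_inl_apply, Fin.castSucc_inj] at this
      exact this
    · exfalso
      have := DFunLike.congr_fun h m₂
      rw [theta_inl_apply, (theta_inr_eq_last_iff m₂ e₂ m₂).mpr rfl] at this
      exact (Fin.castSucc_lt_last _).ne this
    · exfalso
      have := DFunLike.congr_fun h m₁
      rw [(theta_inr_eq_last_iff m₁ e₁ m₁).mpr rfl, theta_inl_apply] at this
      exact (Fin.castSucc_lt_last _).ne this.symm
    · have hm : m₁ = m₂ := by
        have h1 : theta (.inr (m₂, e₂)) m₁ = Fin.last M := by
          rw [← DFunLike.congr_fun h m₁]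
          exact (theta_inr_eq_last_iff m₁ e₁ m₁).mpr rfl
        exact (theta_inr_eq_last_iff m₂ e₂ m₁).mp h1
      subst hm
      have he : e₁ = e₂ := by
        refine DFunLike.ext _ _ fun i => ?_
        have := DFunLike.congr_fun h (Equiv.swap m₁ (Fin.last k) i.castSucc)
        rw [theta_inr_apply, theta_inr_apply, Equiv.swap_apply_self,
          snocEmb_castSucc, snocEmb_castSucc, Fin.castSucc_inj] at this
        exact this
      rw [he]
  · intro j
    by_cases hL : ∃ m, j m = Fin.last M
    · obtain ⟨m, hm⟩ := hL
      have hne : ∀ i : Fin k, j (Equiv.swap m (Fin.last k) i.castSucc) ≠ Fin.last M := by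
        intro i hcon
        have h1 : Equiv.swap m (Fin.last k) i.castSucc = m := j.injective (hcon.trans hm.symm)
        have h2 := congrArg (Equiv.swap m (Fin.last k)) h1
        rw [Equiv.swap_apply_self, Equiv.swap_apply_left] at h2
        exact (Fin.castSucc_lt_last i).ne h2
      refine ⟨.inr (m, ⟨fun i => (j (Equiv.swap m (Fin.last k) i.castSucc)).castPred (hne i),
        fun i i' hii => Fin.castSucc_injective _ ((Equiv.swap m (Fin.last k)).injective
          (j.injective (Fin.castPred_inj.mp hii)))⟩), ?_⟩
      refine DFunLike.ext _ _ fun x => ?_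
      by_cases hx : x = m
      · subst hx
        rw [theta_inr_apply, Equiv.swap_apply_left, snocEmb_last, hm]
      · have hsx : Equiv.swap m (Fin.last k) x ≠ Fin.last k := by
          intro hcon
          have := congrArg (Equiv.swap m (Fin.last k)) hcon
          rw [Equiv.swap_apply_self, Equiv.swap_apply_right] at this
          exact hx this
        have hxi : Equiv.swap m (Fin.last k) x
            = ((Equiv.swap m (Fin.last k) x).castPred hsx).castSucc :=
          (Fin.castSucc_castPred _ hsx).symm
        have hkey : ∀ i : Fin k,
            snocEmb ⟨fun i => (j (Equiv.swap m (Fin.last k) i.castSucc)).castPred (hne i),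
              fun i i' hii => Fin.castSucc_injective _ ((Equiv.swap m (Fin.last k)).injective
                (j.injective (Fin.castPred_inj.mp hii)))⟩ i.castSucc
              = j (Equiv.swap m (Fin.last k) i.castSucc) := by
          intro i
          rw [snocEmb_castSucc]
          exact Fin.castSucc_castPred _ (hne i)
        rw [theta_inr_apply]
        have hgoal : j x = j (Equiv.swap m (Fin.last k) (Equiv.swap m (Fin.last k) x)) := by
          rw [Equiv.swap_apply_self]
        rw [hgoal, hxi]
        exact hkey _
    · push_neg at hL
      refine ⟨.inl ⟨fun x => (j x).castPred (hL x), ?_⟩, ?_⟩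
      · intro x x' hxx
        exact j.injective (Fin.castPred_inj.mp hxx)
      · refine DFunLike.ext _ _ fun x => ?_
        rw [theta_inl_apply]
        show ((j x).castPred (hL x)).castSucc = j x
        exact Fin.castSucc_castPred _ _

/-- Key combinatorial lemma: the symmetrized sum over embeddings determines a symmetric
function. -/
lemma key {X : Type*} [Nonempty X] (k : ℕ) :
    ∀ (N : ℕ), k ≤ N → ∀ f : (Fin k → X) → ℝ,
      (∀ (π : Equiv.Perm (Fin k)) (w : Fin k → X), f (w ∘ ⇑π) = f w) →
      (∀ z : Fin N → X, ∑ j : Fin k ↪ Fin N, f (z ∘ ⇑j) = 0) →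
      ∀ w, f w = 0 := by
  induction k with
  | zero =>
    intro N hN f _ h w
    obtain ⟨x⟩ := (inferInstance : Nonempty X)
    have h1 := h (fun _ => x)
    have hconst : ∀ j : Fin 0 ↪ Fin N, f ((fun _ => x) ∘ ⇑j) = f w := by
      intro j
      exact congrArg f (Subsingleton.elim _ _)
    rw [Finset.sum_congr rfl (fun j _ => hconst j), Finset.sum_const, Finset.card_univ,
      nsmul_eq_mul] at h1
    have hne : Nonempty (Fin 0 ↪ Fin N) := ⟨Function.Embedding.ofIsEmpty⟩
    have hcard : (Fintype.card (Fin 0 ↪ Fin N) : ℝ) ≠ 0 := by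
      exact_mod_cast Fintype.card_ne_zero
    exact (mul_eq_zero.mp h1).resolve_left hcard
  | succ k IH =>
    intro N hN f hsym h w
    obtain ⟨M, rfl⟩ : ∃ M, N = M + 1 :=
      ⟨N - 1, (Nat.succ_pred_eq_of_pos (lt_of_lt_of_le (Nat.succ_pos k) hN)).symm⟩
    have hkM : k ≤ M := Nat.succ_le_succ_iff.mp hN
    -- Decompose the hypothesis sum using `theta`.
    have hsplit : ∀ (z' : Fin M → X) (y : X),
        (∑ e : Fin (k + 1) ↪ Fin M, f (z' ∘ ⇑e))
          + (k + 1 : ℕ) • (∑ e : Fin k ↪ Fin M, f (Fin.snoc (z' ∘ ⇑e) y)) = 0 := by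
      intro z' y
      have h0 := h (Fin.snoc z' y)
      rw [← Fintype.sum_bijective theta theta_bijective
        (fun p => f ((Fin.snoc z' y : Fin (M + 1) → X) ∘ ⇑(theta p)))
        (fun j => f ((Fin.snoc z' y : Fin (M + 1) → X) ∘ ⇑j)) (fun p => rfl)] at h0
      rw [Fintype.sum_sum_type] at h0
      have hA : ∀ e : Fin (k + 1) ↪ Fin M,
          f ((Fin.snoc z' y : Fin (M + 1) → X) ∘ ⇑(theta (.inl e))) = f (z' ∘ ⇑e) := by
        intro e
        congr 1
        funext x
        show (Fin.snoc z' y : Fin (M + 1) → X) ((e x).castSucc) = z' (e x)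
        rw [Fin.snoc_castSucc]
      have hB : ∀ p : Fin (k + 1) × (Fin k ↪ Fin M),
          f ((Fin.snoc z' y : Fin (M + 1) → X) ∘ ⇑(theta (.inr p)))
            = f (Fin.snoc (z' ∘ ⇑p.2) y) := by
        rintro ⟨m, e⟩
        have hcomp : (Fin.snoc z' y : Fin (M + 1) → X) ∘ ⇑(theta (.inr (m, e)))
            = ((Fin.snoc z' y : Fin (M + 1) → X) ∘ ⇑(snocEmb e)) ∘ ⇑(Equiv.swap m (Fin.last k)) :=
          rfl
        rw [hcomp, hsym (Equiv.swap m (Fin.last k))]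
        congr 1
        funext x
        induction x using Fin.lastCases with
        | last =>
          show (Fin.snoc z' y : Fin (M + 1) → X) (snocEmb e (Fin.last k)) = _
          rw [snocEmb_last, Fin.snoc_last, Fin.snoc_last]
        | cast i =>
          show (Fin.snoc z' y : Fin (M + 1) → X) (snocEmb e i.castSucc) = _
          rw [snocEmb_castSucc, Fin.snoc_castSucc, Fin.snoc_castSucc]
          rfl
      rw [Finset.sum_congr rfl (fun e _ => hA e)] at h0
      rw [Finset.sum_congr rfl (fun p _ => hB p)] at h0
      rw [Fintype.sum_prod_type] at h0
      simp only [Finset.sum_const, Finset.card_univ, Fintype.card_fin] at h0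
      exact h0
    -- Deduce that `f ∘ snoc` does not depend on the last entry.
    have hind : ∀ (v : Fin k → X) (y y' : X), f (Fin.snoc v y) = f (Fin.snoc v y') := by
      intro v y y'
      set D : (Fin k → X) → ℝ := fun u => f (Fin.snoc u y) - f (Fin.snoc u y') with hD
      have hDsym : ∀ (π : Equiv.Perm (Fin k)) (u : Fin k → X), D (u ∘ ⇑π) = D u := by
        intro π u
        simp only [hD]
        rw [← snoc_comp_extPerm u y π, ← snoc_comp_extPerm u y' π,
          hsym (extPerm π), hsym (extPerm π)]
      have hDsum : ∀ z : Fin M → X, ∑ e : Fin k ↪ Fin M, D (z ∘ ⇑e) = 0 := by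
        intro z
        have h1 := hsplit z y
        have h2 := hsplit z y'
        have h3 : (k + 1 : ℕ) • ((∑ e : Fin k ↪ Fin M, f (Fin.snoc (z ∘ ⇑e) y))
            - ∑ e : Fin k ↪ Fin M, f (Fin.snoc (z ∘ ⇑e) y')) = 0 := by
          rw [smul_sub]
          have := sub_eq_zero_of_eq (h1.trans h2.symm)
          linarith [this]
        have h4 : ((∑ e : Fin k ↪ Fin M, f (Fin.snoc (z ∘ ⇑e) y))
            - ∑ e : Fin k ↪ Fin M, f (Fin.snoc (z ∘ ⇑e) y')) = 0 := by
          have hk1 : ((k : ℝ) + 1) ≠ 0 := by positivity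
          rw [nsmul_eq_mul] at h3
          push_cast at h3
          exact (mul_eq_zero.mp h3).resolve_left hk1
        rw [← Finset.sum_sub_distrib] at h4
        exact h4
      have := IH M hkM D hDsym hDsum v
      simpa [hD, sub_eq_zero] using this
    -- `f` is invariant under updating the last coordinate.
    have hlast : ∀ (v : Fin (k + 1) → X) (y : X),
        f (Function.update v (Fin.last k) y) = f v := by
      intro v y
      have h1 : Function.update v (Fin.last k) y = Fin.snoc (Fin.init v) y := by
        funext x
        induction x using Fin.lastCases with
        | last => simp
        | cast i =>
          rw [Function.update_of_ne (Fin.castSucc_lt_last i).ne, Fin.snoc_castSucc]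
          rfl
      rw [h1, hind (Fin.init v) y (v (Fin.last k)), Fin.snoc_init_self]
    -- `f` is invariant under updating any coordinate.
    have hupd : ∀ (v : Fin (k + 1) → X) (m : Fin (k + 1)) (y : X),
        f (Function.update v m y) = f v := by
      intro v m y
      have h2 := hsym (Equiv.swap m (Fin.last k)) (Function.update v m y)
      have h3 : (Function.update v m y) ∘ ⇑(Equiv.swap m (Fin.last k))
          = Function.update (v ∘ ⇑(Equiv.swap m (Fin.last k))) (Fin.last k) y := by
        funext x
        by_cases hx : x = Fin.last k
        · subst hx
          show Function.update v m y (Equiv.swap m (Fin.last k) (Fin.last k)) = _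
          rw [Equiv.swap_apply_right, Function.update_self, Function.update_self]
        · have hsx : Equiv.swap m (Fin.last k) x ≠ m := by
            intro hcon
            have := congrArg (Equiv.swap m (Fin.last k)) hcon
            rw [Equiv.swap_apply_self, Equiv.swap_apply_left] at this
            exact hx this
          show Function.update v m y (Equiv.swap m (Fin.last k) x) = _
          rw [Function.update_of_ne hsx, Function.update_of_ne hx]
          rfl
      rw [← h2, h3, hlast, hsym (Equiv.swap m (Fin.last k)) v]
    -- Hence `f` is constant.
    have hconst : ∀ w₁ w₂ : Fin (k + 1) → X, f w₁ = f w₂ := by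
      intro w₁ w₂
      have hstep : ∀ s : Finset (Fin (k + 1)),
          f (fun i => if i ∈ s then w₂ i else w₁ i) = f w₁ := by
        intro s
        induction s using Finset.induction with
        | empty => simp
        | @insert a s ha IHs =>
          have heq : (fun i => if i ∈ insert a s then w₂ i else w₁ i)
              = Function.update (fun i => if i ∈ s then w₂ i else w₁ i) a (w₂ a) := by
            funext i
            by_cases hi : i = a
            · subst hi; simp
            · rw [Function.update_of_ne hi]
              simp [Finset.mem_insert, hi]
          rw [heq, hupd, IHs]
      have := hstep Finset.univ
      simpa using this.symm
    -- Conclude that the constant is zero.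
    obtain ⟨x⟩ := (inferInstance : Nonempty X)
    have h5 := h (fun _ => x)
    rw [Finset.sum_congr rfl (fun (j : Fin (k + 1) ↪ Fin (M + 1)) _ => hconst ((fun _ => x) ∘ ⇑j) w), Finset.sum_const,
      Finset.card_univ, nsmul_eq_mul] at h5
    have hne : Nonempty (Fin (k + 1) ↪ Fin (M + 1)) := ⟨Fin.castLEEmb hN⟩
    have hcard : (Fintype.card (Fin (k + 1) ↪ Fin (M + 1)) : ℝ) ≠ 0 := by
      exact_mod_cast Fintype.card_ne_zero
    exact (mul_eq_zero.mp h5).resolve_left hcard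

/-- `ε_{k,N}` is injective on `𝔤_k`: if `f ∈ 𝔤_k` and `ε_{k,N}(f) = 0` then `f = 0`. -/
theorem statement4 (d k N : ℕ) (hk : 1 ≤ k) (hkN : k ≤ N)
    (f : Conf d k → ℝ) (hf : ContDiff ℝ (⊤ : ℕ∞) f) (hs : IsSymmFn d k f)
    (h0 : eps d k N f = 0) : f = 0 := by
  have hsym : ∀ (π : Equiv.Perm (Fin k)) (w : Conf d k), f (w ∘ ⇑π) = f w := by
    intro π w
    exact congrFun (hs π) w
  have hsum : ∀ z : Conf d N, ∑ j : Fin k ↪ Fin N, f (z ∘ ⇑j) = 0 := by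
    intro z
    have h0z := congrFun h0 z
    have hne : Nonempty {j : Fin k → Fin N // Function.Injective j} :=
      ⟨⟨⇑(Fin.castLEEmb hkN), (Fin.castLEEmb hkN).injective⟩⟩
    have hcard : (Fintype.card {j : Fin k → Fin N // Function.Injective j} : ℝ) ≠ 0 := by
      exact_mod_cast Fintype.card_ne_zero
    have hsub : ∑ j : {j : Fin k → Fin N // Function.Injective j}, f (fun i => z (j.1 i)) = 0 := by
      have := (mul_eq_zero.mp h0z).resolve_left (inv_ne_zero hcard)
      exact this
    rw [← hsub]
    exact Fintype.sum_equiv (Equiv.subtypeInjectiveEquivEmbedding (Fin k) (Fin N)).symm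
      (fun j : Fin k ↪ Fin N => f (z ∘ ⇑j)) (fun j => f (fun i => z (j.1 i))) (fun j => rfl)
  funext w
  exact key k N hkN f hsym hsum w
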